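/- Let f(x) = r(x) be the number-of-runs function on F_2^k, t ≥ 1, and k ≥ t + 2. Then r^f_ID(k, t) ≥ (2/(t+2)²)·( 5t(t+1)(t+2)/6 + ⌈t/2⌉·(t+1) + ⌈t/2⌉² ). -/

import Mathlib

/-- Length of a longest common subsequence of two binary words. -/
noncomputable def lcsLen (x y : List Bool) : ℕ :=
  sSup {n | ∃ z : List Bool, z.length = n ∧ z.Sublist x ∧ z.Sublist y}

/-- The insdel distance `d_ID(x,y) = |x| + |y| - 2·LCS(x,y)`. -/
noncomputable def dID (x y : List Bool) : ℕ :=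
  x.length + y.length - 2 * lcsLen x y

/-- Number of runs (maximal blocks of consecutive equal symbols) of a binary word. -/
def runs (x : List Bool) : ℕ := (x.destutter (· ≠ ·)).length

/-- Maximum run length of a binary word: the largest `n` such that some constant
word of length `n` occurs as a block of consecutive symbols of `x`. -/
noncomputable def maxRun (x : List Bool) : ℕ :=
  sSup {n | ∃ b : Bool, (List.replicate n b).IsInfix x}

/-- `D_t(x)`: the words of length `|x| - t` that are subsequences of `x`. -/
def Dset (t : ℕ) (x : List Bool) : Set (List Bool) :=
  {z | z.length = x.length - t ∧ z.Sublist x}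

/-- `I_t(x)`: the words of length `|x| + t` that are supersequences of `x`. -/
def Iset (t : ℕ) (x : List Bool) : Set (List Bool) :=
  {z | z.length = x.length + t ∧ x.Sublist z}

/-- A systematic encoding `x ↦ (x, p(x))` with redundancy words `p x` of length `r`
is a function-correcting insdel code for `f` correcting `t` insdel errors. -/
noncomputable def IsFCIDC {k : ℕ} {S : Type*} (f : (Fin k → Bool) → S) (t r : ℕ)
    (p : (Fin k → Bool) → List Bool) : Prop :=
  (∀ x, (p x).length = r) ∧
  ∀ x y, f x ≠ f y → 2 * t < dID (List.ofFn x ++ p x) (List.ofFn y ++ p y)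

/-- The optimal redundancy `r^f_ID(k,t)`. -/
noncomputable def optRed {k : ℕ} {S : Type*} (f : (Fin k → Bool) → S) (t : ℕ) : ℕ :=
  sInf {r | ∃ p, IsFCIDC f t r p}

/-- `p` is an irregular insdel-distance code of length `r` for the matrix `I`. -/
noncomputable def IsIrregularCode {M : ℕ} (I : Fin M → Fin M → ℕ) (r : ℕ)
    (p : Fin M → List Bool) : Prop :=
  (∀ i, (p i).length = r) ∧ ∀ i j, I i j ≤ dID (p i) (p j)

/-- `N^(1)_ID(I)`: least length of an irregular insdel-distance code for `I`. -/
noncomputable def N1 {M : ℕ} (I : Fin M → Fin M → ℕ) : ℕ :=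
  sInf {r | ∃ p, IsIrregularCode I r p}

/-- `N^(2)_ID(I; K)`: least length `r ≥ K` of an irregular insdel-distance code for `I`. -/
noncomputable def N2 {M : ℕ} (I : Fin M → Fin M → ℕ) (K : ℕ) : ℕ :=
  sInf {r | K ≤ r ∧ ∃ p, IsIrregularCode I r p}

-- The insdel distance matrix `I_f^(1)(t, x₁, …, x_M)`.
open Classical in
noncomputable def Imat1 {k M : ℕ} {S : Type*} (f : (Fin k → Bool) → S) (t : ℕ)
    (x : Fin M → Fin k → Bool) : Fin M → Fin M → ℕ :=
  fun i j => if f (x i) ≠ f (x j) then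
    2 * t + 2 - dID (List.ofFn (x i)) (List.ofFn (x j)) else 0

-- The insdel distance matrix `I_f^(2)(t, x₁, …, x_M)`.
open Classical in
noncomputable def Imat2 {k M : ℕ} {S : Type*} (f : (Fin k → Bool) → S) (t : ℕ)
    (x : Fin M → Fin k → Bool) : Fin M → Fin M → ℕ :=
  fun i j => if f (x i) ≠ f (x j) then
    2 * t + 2 + 2 * k - dID (List.ofFn (x i)) (List.ofFn (x j)) else 0

/-- The function distance `d^f_ID(a,b)`. -/
noncomputable def dfID {k : ℕ} {S : Type*} (f : (Fin k → Bool) → S) (a b : S) : ℕ :=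
  sInf {d | ∃ x y : Fin k → Bool, f x = a ∧ f y = b ∧ dID (List.ofFn x) (List.ofFn y) = d}

/-- The function distance matrix `I_f^(2)(t, f₁, …, f_E)`, with entries
`max(2(t+1+k) − d^f_ID(f_i, f_j), 0)` off the diagonal and `0` on the diagonal. -/
noncomputable def funMat2 {k E : ℕ} {S : Type*} (f : (Fin k → Bool) → S) (t : ℕ)
    (fs : Fin E → S) : Fin E → Fin E → ℕ :=
  fun i j => if i = j then 0 else 2 * (t + 1 + k) - dfID f (fs i) (fs j)

/-- The uniform `M × M` matrix with off-diagonal entries `d` and zero diagonal. -/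
def uniMat (M d : ℕ) : Fin M → Fin M → ℕ := fun i j => if i = j then 0 else d

/-- The number-of-runs function on `F_2^k`. -/
def runsFn (k : ℕ) (x : Fin k → Bool) : ℕ := runs (List.ofFn x)

/-- The VT-syndrome function `f(x) = Σ_{j=1}^k j·x_j mod (k+1)`. -/
def vtFn (k : ℕ) (x : Fin k → Bool) : ℕ :=
  (∑ j : Fin k, ((j : ℕ) + 1) * (if x j then 1 else 0)) % (k + 1)

/-- The function ball `B^f_ID(u, ρ) = f(B_ID(u, ρ))`. -/
def fball {k : ℕ} {S : Type*} (f : (Fin k → Bool) → S) (u : Fin k → Bool) (ρ : ℕ) : Set S :=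
  f '' {v : Fin k → Bool | dID (List.ofFn u) (List.ofFn v) ≤ ρ}

/-- `V_ID(r, d)`: the maximum size of an insdel ball of (integer) radius `d`
among centers in `F_2^r`. -/
noncomputable def Vid (r : ℕ) (d : ℤ) : ℕ :=
  sSup (Set.range fun x : Fin r → Bool =>
    Nat.card {y : Fin r → Bool | (dID (List.ofFn x) (List.ofFn y) : ℤ) ≤ d})

lemma lcs_bdd (x y : List Bool) : BddAbove {n | ∃ z : List Bool, z.length = n ∧ z.Sublist x ∧ z.Sublist y} :=
  ⟨x.length, fun n ⟨z, hl, hx, _⟩ => hl ▸ hx.length_le⟩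

lemma le_lcsLen {x y z : List Bool} (hx : z.Sublist x) (hy : z.Sublist y) :
    z.length ≤ lcsLen x y :=
  le_csSup (lcs_bdd x y) ⟨z, rfl, hx, hy⟩

lemma lcsLen_le {x y : List Bool} {B : ℕ}
    (h : ∀ z : List Bool, z.Sublist x → z.Sublist y → z.length ≤ B) : lcsLen x y ≤ B :=
  csSup_le ⟨0, ⟨[], rfl, List.nil_sublist _, List.nil_sublist _⟩⟩
    (fun n ⟨z, hl, hx, hy⟩ => hl ▸ h z hx hy)

lemma lcsLen_le_left (x y : List Bool) : lcsLen x y ≤ x.length :=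
  lcsLen_le fun _ hx _ => hx.length_le

lemma length_eq_count (l : List Bool) : l.length = l.count true + l.count false := by
  induction l with
  | nil => simp
  | cons a l ih =>
      cases a <;>
        simp only [List.length_cons, List.count_cons, ih, beq_iff_eq] <;> simp <;> omega

lemma runs_rep_append (s : List Bool) : ∀ n, runs (List.replicate (n+1) false ++ s) = runs (false :: s) := by
  intro n
  induction n with
  | zero => simp [runs]
  | succ m ih =>
      have : List.replicate (m+2) false ++ s = false :: false :: (List.replicate m false ++ s) := by
        simp [List.replicate_succ]
      rw [this]
      have h2 : List.replicate (m+1) false ++ s = false :: (List.replicate m false ++ s) := by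
        simp [List.replicate_succ]
      rw [show runs (false :: false :: (List.replicate m false ++ s)) = runs (false :: (List.replicate m false ++ s)) by
        simp [runs, List.destutter_cons_cons, List.destutter]]
      rw [← h2, ih]

lemma ofFn_eq {k : ℕ} (u : List Bool) (h : u.length = k) :
    List.ofFn (fun i : Fin k => u.get (Fin.cast h.symm i)) = u := by
  subst h
  simpa using List.ofFn_get u

lemma runs_small_1 : runs [false] = 1 := by decide
lemma runs_small_2 : runs [false, true] = 2 := by decide
lemma runs_small_3 : runs [false, true, false] = 3 := by decide

lemma runs_u1 {k : ℕ} (hk : 1 ≤ k) : runs (List.replicate k false) = 1 := by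
  obtain ⟨m, rfl⟩ : ∃ m, k = m + 1 := ⟨k - 1, by omega⟩
  have := runs_rep_append [] m
  simpa [runs_small_1] using this

lemma runs_u2 {k : ℕ} (hk : 2 ≤ k) : runs (List.replicate (k-1) false ++ [true]) = 2 := by
  obtain ⟨m, hm⟩ : ∃ m, k - 1 = m + 1 := ⟨k - 2, by omega⟩
  rw [hm, runs_rep_append]
  decide

lemma runs_u3 {k : ℕ} (hk : 3 ≤ k) :
    runs (List.replicate (k-2) false ++ [true, false]) = 3 := by
  obtain ⟨m, hm⟩ : ∃ m, k - 2 = m + 1 := ⟨k - 3, by omega⟩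
  rw [hm, runs_rep_append]
  decide

lemma pair_bound {k t r : ℕ} {S : Type*} {f : (Fin k → Bool) → S}
    {p : (Fin k → Bool) → List Bool} (hk : 1 ≤ k)
    (h : IsFCIDC f t r p) (x y : Fin k → Bool) (hne : f x ≠ f y)
    (z : List Bool) (hz : z.length = k - 1)
    (hzx : z.Sublist (List.ofFn x)) (hzy : z.Sublist (List.ofFn y))
    (b : Bool) (hbx : r - r / 2 ≤ (p x).count b) (hby : r - r / 2 ≤ (p y).count b) :
    2 * t ≤ r := by
  have hd := h.2 x y hne
  set u := List.ofFn x ++ p x with hu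
  set v := List.ofFn y ++ p y with hv
  have hL1 : (k - 1) + (r - r / 2) ≤ lcsLen u v := by
    have hsx : (z ++ List.replicate (r - r / 2) b).Sublist u :=
      hzx.append (List.replicate_sublist_iff.mpr hbx)
    have hsy : (z ++ List.replicate (r - r / 2) b).Sublist v :=
      hzy.append (List.replicate_sublist_iff.mpr hby)
    have := le_lcsLen hsx hsy
    simpa [hz] using this
  have hL2 : lcsLen u v ≤ k + r := by
    have := lcsLen_le_left u v
    simpa [hu, h.1 x] using this
  have hul : u.length = k + r := by simp [hu, h.1 x]
  have hvl : v.length = k + r := by simp [hv, h.1 y]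
  rw [dID, hul, hvl] at hd
  omega

lemma lower {k t r : ℕ} (ht : 1 ≤ t) (hk : t + 2 ≤ k)
    {p : (Fin k → Bool) → List Bool}
    (h : IsFCIDC (runsFn k) t r p) : 2 * t ≤ r := by
  have hk3 : 3 ≤ k := by omega
  set u1 := List.replicate k false with hu1
  set u2 := List.replicate (k-1) false ++ [true] with hu2
  set u3 := List.replicate (k-2) false ++ [true, false] with hu3
  have hl1 : u1.length = k := by simp [hu1]
  have hl2 : u2.length = k := by simp [hu2]; omega
  have hl3 : u3.length = k := by simp [hu3]; omega
  set x1 := fun i : Fin k => u1.get (Fin.cast hl1.symm i) with hx1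
  set x2 := fun i : Fin k => u2.get (Fin.cast hl2.symm i) with hx2
  set x3 := fun i : Fin k => u3.get (Fin.cast hl3.symm i) with hx3
  have ho1 : List.ofFn x1 = u1 := ofFn_eq u1 hl1
  have ho2 : List.ofFn x2 = u2 := ofFn_eq u2 hl2
  have ho3 : List.ofFn x3 = u3 := ofFn_eq u3 hl3
  have hr1 : runsFn k x1 = 1 := by rw [runsFn, ho1, hu1]; exact runs_u1 (by omega)
  have hr2 : runsFn k x2 = 2 := by rw [runsFn, ho2, hu2]; exact runs_u2 (by omega)
  have hr3 : runsFn k x3 = 3 := by rw [runsFn, ho3, hu3]; exact runs_u3 hk3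
  -- majority bits
  have hmaj : ∀ w : Fin k → Bool, ∃ b : Bool, r - r / 2 ≤ (p w).count b := by
    intro w
    have hc := length_eq_count (p w)
    rw [h.1 w] at hc
    rcases le_or_gt (r - r / 2) ((p w).count true) with hle | hlt
    · exact ⟨true, hle⟩
    · exact ⟨false, by omega⟩
  obtain ⟨b1, hb1⟩ := hmaj x1
  obtain ⟨b2, hb2⟩ := hmaj x2
  obtain ⟨b3, hb3⟩ := hmaj x3
  -- common subsequences of length k-1
  have hk2e : k - 1 = (k - 2) + 1 := by omega
  have hz12x : (List.replicate (k-1) false).Sublist u1 := by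
    rw [hu1]; exact (List.replicate_sublist_replicate false).mpr (by omega)
  have hz12y : (List.replicate (k-1) false).Sublist u2 := by
    rw [hu2]; exact List.sublist_append_left _ _
  have hz13 : ∃ z : List Bool, z.length = k - 1 ∧ z.Sublist u1 ∧ z.Sublist u3 := by
    refine ⟨List.replicate (k-2) false ++ [false], by simp; omega, ?_, ?_⟩
    · rw [hu1, show k = (k-2) + 2 by omega, List.replicate_add]
      exact (List.Sublist.refl _).append (by simp)
    · rw [hu3]
      exact (List.Sublist.refl _).append (by simp)
  have hz23 : ∃ z : List Bool, z.length = k - 1 ∧ z.Sublist u2 ∧ z.Sublist u3 := by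
    refine ⟨List.replicate (k-2) false ++ [true], by simp; omega, ?_, ?_⟩
    · rw [hu2, hk2e, List.replicate_succ', List.append_assoc]
      exact (List.Sublist.refl _).append (by simp)
    · rw [hu3]
      exact (List.Sublist.refl _).append (by simp)
  have htri : b1 = b2 ∨ b1 = b3 ∨ b2 = b3 := by
    cases b1 <;> cases b2 <;> cases b3 <;> simp
  rcases htri with hbb | hbb | hbb
  · exact pair_bound (by omega) h x1 x2 (by rw [hr1, hr2]; omega)
      (List.replicate (k-1) false) (by simp) (ho1 ▸ hz12x) (ho2 ▸ hz12y)
      b1 hb1 (hbb ▸ hb2)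
  · obtain ⟨z, hzl, hz1, hz3⟩ := hz13
    exact pair_bound (by omega) h x1 x3 (by rw [hr1, hr3]; omega)
      z hzl (ho1 ▸ hz1) (ho3 ▸ hz3) b1 hb1 (hbb ▸ hb3)
  · obtain ⟨z, hzl, hz2, hz3⟩ := hz23
    exact pair_bound (by omega) h x2 x3 (by rw [hr2, hr3]; omega)
      z hzl (ho2 ▸ hz2) (ho3 ▸ hz3) b2 hb2 (hbb ▸ hb3)

lemma runs_le_length (l : List Bool) : runs l ≤ l.length :=
  (List.destutter_sublist _ l).length_le

lemma exists_code (k t : ℕ) : ∃ r p, IsFCIDC (runsFn k) t r p := by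
  set C := k + t + 1 with hC
  refine ⟨C * (k + 1),
    fun x => List.replicate (C * runsFn k x) true ++
      List.replicate (C * (k + 1) - C * runsFn k x) false, ?_, ?_⟩
  · intro x
    have h1 : runsFn k x ≤ k + 1 := by
      have := runs_le_length (List.ofFn x)
      simp only [List.length_ofFn] at this
      simp only [runsFn]; omega
    have h2 : C * runsFn k x ≤ C * (k + 1) := Nat.mul_le_mul_left C h1
    simp only [List.length_append, List.length_replicate]
    omega
  · intro x y hne
    show 2 * t < dID
      (List.ofFn x ++ (List.replicate (C * runsFn k x) true ++
        List.replicate (C * (k + 1) - C * runsFn k x) false))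
      (List.ofFn y ++ (List.replicate (C * runsFn k y) true ++
        List.replicate (C * (k + 1) - C * runsFn k y) false))
    set a := runsFn k x with ha
    set b := runsFn k y with hb
    have hak : a ≤ k := by
      have := runs_le_length (List.ofFn x); simp only [List.length_ofFn] at this
      simpa [ha, runsFn] using this
    have hbk : b ≤ k := by
      have := runs_le_length (List.ofFn y); simp only [List.length_ofFn] at this
      simpa [hb, runsFn] using this
    set px := List.replicate (C * a) true ++ List.replicate (C * (k+1) - C * a) false with hpx
    set py := List.replicate (C * b) true ++ List.replicate (C * (k+1) - C * b) false with hpy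
    -- counts in px, py
    have hct : ∀ (c : ℕ), c ≤ k →
        (List.replicate (C * c) true ++ List.replicate (C * (k+1) - C * c) false).count true = C * c ∧
        (List.replicate (C * c) true ++ List.replicate (C * (k+1) - C * c) false).count false
          = C * (k+1) - C * c := by
      intro c _
      constructor <;> simp [List.count_append, List.count_replicate]
    -- key LCS bound
    have hLCS : lcsLen (List.ofFn x ++ px) (List.ofFn y ++ py) ≤ 2 * k + C * k := by
      apply lcsLen_le
      intro z hzx hzy
      obtain ⟨z1, z2, rfl, hz1, hz2⟩ := List.sublist_append_iff.mp hzx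
      have hz2' : z2.Sublist (List.ofFn y ++ py) :=
        ((List.sublist_append_right z1 z2).trans hzy)
      obtain ⟨w1, w2, hz2e, hw1, hw2⟩ := List.sublist_append_iff.mp hz2'
      have hw2x : w2.Sublist px := by
        have : w2.Sublist z2 := hz2e ▸ List.sublist_append_right w1 w2
        exact this.trans hz2
      -- count bounds on w2
      have hctx := hct a hak
      have hcty := hct b hbk
      have h1 : w2.count true ≤ C * a := by
        have := hw2x.count_le true; rw [← hpx] at hctx; omega
      have h2 : w2.count true ≤ C * b := by
        have := hw2.count_le true; rw [← hpy] at hcty; omega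
      have h3 : w2.count false ≤ C * (k+1) - C * a := by
        have := hw2x.count_le false; rw [← hpx] at hctx; omega
      have h4 : w2.count false ≤ C * (k+1) - C * b := by
        have := hw2.count_le false; rw [← hpy] at hcty; omega
      have hw2len : w2.length ≤ C * k := by
        rw [length_eq_count w2]
        have e1 : C * (a + 1) = C * a + C := by ring
        have e2 : C * (b + 1) = C * b + C := by ring
        have e3 : C * (k + 1) = C * k + C := by ring
        rcases Nat.lt_or_ge a b with hab | hab
        · have : C * (a + 1) ≤ C * b := Nat.mul_le_mul_left C hab
          have hbk1 : C * b ≤ C * (k+1) := Nat.mul_le_mul_left C (by omega)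
          omega
        · have hab' : b < a := by omega
          have : C * (b + 1) ≤ C * a := Nat.mul_le_mul_left C hab'
          have hak1 : C * a ≤ C * (k+1) := Nat.mul_le_mul_left C (by omega)
          omega
      have hlz1 : z1.length ≤ k := by
        have := hz1.length_le; simpa using this
      have hlw1 : w1.length ≤ k := by
        have := hw1.length_le; simpa using this
      have : z2.length = w1.length + w2.length := by rw [hz2e]; simp
      simp only [List.length_append]
      omega
    have hpxl : px.length = C * (k + 1) := by
      have h2 : C * a ≤ C * (k + 1) := Nat.mul_le_mul_left C (by omega)
      simp only [hpx, List.length_append, List.length_replicate]; omega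
    have hpyl : py.length = C * (k + 1) := by
      have h2 : C * b ≤ C * (k + 1) := Nat.mul_le_mul_left C (by omega)
      simp only [hpy, List.length_append, List.length_replicate]; omega
    rw [dID]
    simp only [List.length_append, List.length_ofFn, hpxl, hpyl]
    have e3 : C * (k + 1) = C * k + C := by ring
    have hCk : C = k + t + 1 := hC
    omega

theorem stmt14 (k t : ℕ) (ht : 1 ≤ t) (hk : t + 2 ≤ k) :
    2 / ((t : ℚ) + 2) ^ 2 *
      (5 * (t : ℚ) * ((t : ℚ) + 1) * ((t : ℚ) + 2) / 6 +
        (((t + 1) / 2 : ℕ) : ℚ) * ((t : ℚ) + 1) + (((t + 1) / 2 : ℕ) : ℚ) ^ 2)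
      ≤ (optRed (runsFn k) t : ℚ) := by
  have h2t : 2 * t ≤ optRed (runsFn k) t := by
    obtain ⟨r, p, hp⟩ := exists_code k t
    have hmem := Nat.sInf_mem (⟨r, p, hp⟩ : {r | ∃ p, IsFCIDC (runsFn k) t r p}.Nonempty)
    obtain ⟨p', hp'⟩ := hmem
    exact lower ht hk hp'
  have hcast : (2 * (t : ℚ)) ≤ (optRed (runsFn k) t : ℚ) := by
    have := (Nat.cast_le (α := ℚ)).mpr h2t
    push_cast at this
    linarith
  refine le_trans ?_ hcast
  set c : ℚ := (((t + 1) / 2 : ℕ) : ℚ) with hc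
  have hc0 : 0 ≤ c := by positivity
  have hc2 : 2 * c ≤ (t : ℚ) + 1 := by
    have h := Nat.div_mul_le_self (t + 1) 2
    have := (Nat.cast_le (α := ℚ)).mpr h
    push_cast at this
    linarith
  have ht1 : (1 : ℚ) ≤ (t : ℚ) := by exact_mod_cast ht
  have hpos : (0 : ℚ) < ((t : ℚ) + 2) ^ 2 := by positivity
  rw [div_mul_eq_mul_div, div_le_iff₀ hpos]
  nlinarith [mul_nonneg hc0 (sub_nonneg.mpr hc2), sq_nonneg ((t:ℚ) + 1 - 2*c),
    mul_nonneg (sub_nonneg.mpr ht1) (sq_nonneg ((t:ℚ)+1)),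
    mul_nonneg (sub_nonneg.mpr ht1) (mul_nonneg (sub_nonneg.mpr hc2) hc0),
    sq_nonneg ((t:ℚ) - 1), mul_nonneg (sub_nonneg.mpr ht1) (sub_nonneg.mpr ht1)]
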